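/- arXiv:2510.08806 — 3 statements merged into one kernel-verified Lean document; each statement's English description precedes it below -/
import Mathlib

section
/- Let W be a real n×n matrix with W𝟙 = 𝟙 (row sums equal to 1), set η = ‖I − W‖ (the ℓ₂ operator norm), and let γ, ε ∈ ℝ. Let X, X̂, D ∈ ℝ^{n×p}, let x̄ = (1/n)𝟙ᵀX be the row-average of X, and set X⁺ = X − γ·(I − W)·X̂ − ε·D. Then ‖X⁺ − X‖² ≤ 3γ²η²‖X − X̂‖² + 3γ²η²‖X − 𝟙x̄‖² + 3ε²‖D‖², where ‖·‖ on n×p matrices is the Frobenius norm ‖Z‖ = (∑ᵢ ‖zᵢ‖²)^{1/2} with zᵢ the rows of Z. -/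
/-!
Since `W𝟙 = 𝟙`, the matrix `I - W` annihilates the consensus matrix `𝟙x̄`, so
`X⁺ - X = γ(I - W)(X - X̂) + γ(I - W)(𝟙x̄ - X) - εD`. The bound follows from
`‖a + b + c‖² ≤ 3(‖a‖² + ‖b‖² + ‖c‖²)` and `‖AB‖_F ≤ ‖A‖_op ‖B‖_F`, the latter applied column
by column.
-/

/-- Frobenius norm of a real `n × p` matrix. -/
noncomputable def frobeniusNorm {n p : ℕ} (Z : Matrix (Fin n) (Fin p) ℝ) : ℝ :=
  Real.sqrt (∑ i, ∑ j, (Z i j) ^ 2)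

open scoped Matrix.Norms.Frobenius

theorem frobeniusNorm_eq_norm {n p : ℕ} (Z : Matrix (Fin n) (Fin p) ℝ) :
    frobeniusNorm Z = ‖Z‖ := by
  simp [frobeniusNorm, Matrix.frobenius_norm_def, Real.sqrt_eq_rpow]

theorem norm_add₃_sq_le {E : Type*} [SeminormedAddGroup E] (a b c : E) :
    ‖a + b + c‖ ^ 2 ≤ 3 * ‖a‖ ^ 2 + 3 * ‖b‖ ^ 2 + 3 * ‖c‖ ^ 2 := by
  have h := norm_add₃_le (a := a) (b := b) (c := c)
  have := norm_nonneg (a + b + c)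
  nlinarith [sq_nonneg (‖a‖ - ‖b‖), sq_nonneg (‖b‖ - ‖c‖), sq_nonneg (‖a‖ - ‖c‖)]

namespace Matrix

variable {𝕜 m n p α : Type*}

theorem frobenius_norm_sq_eq_sum_norm_row_sq [Fintype m] [Fintype n] [SeminormedAddCommGroup α]
    (A : Matrix m n α) : ‖A‖ ^ 2 = ∑ i, ‖WithLp.toLp 2 (A i)‖ ^ 2 :=
  PiLp.norm_sq_eq_of_L2 _ (WithLp.toLp 2 fun i => WithLp.toLp 2 (A i))

theorem frobenius_norm_mul_le_toEuclideanCLM [RCLike 𝕜] [Fintype n] [DecidableEq n] [Fintype p]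
    (A : Matrix n n 𝕜) (B : Matrix n p 𝕜) :
    ‖A * B‖ ≤ ‖toEuclideanCLM (𝕜 := 𝕜) A‖ * ‖B‖ := by
  rw [← frobenius_norm_transpose, ← frobenius_norm_transpose B]
  refine le_of_pow_le_pow_left₀ two_ne_zero (by positivity) ?_
  rw [mul_pow, frobenius_norm_sq_eq_sum_norm_row_sq, frobenius_norm_sq_eq_sum_norm_row_sq,
    Finset.mul_sum]
  refine Finset.sum_le_sum fun j _ => ?_
  have hcol :
      WithLp.toLp 2 ((A * B)ᵀ j) = toEuclideanCLM (𝕜 := 𝕜) A (WithLp.toLp 2 (Bᵀ j)) := rfl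
  rw [hcol, ← mul_pow]
  exact pow_le_pow_left₀ (norm_nonneg _) ((toEuclideanCLM (𝕜 := 𝕜) A).le_opNorm _) 2

theorem mul_replicateRow_eq_zero [Fintype n] [NonUnitalNonAssocSemiring α] {A : Matrix m n α}
    (hA : ∀ i, ∑ j, A i j = 0) (v : p → α) : A * replicateRow n v = 0 := by
  ext i j
  simp [mul_apply, ← Finset.sum_mul, hA i]

end Matrix

theorem decision_update_displacement_bound_general (n p : ℕ) (W : Matrix (Fin n) (Fin n) ℝ)
    (hW : ∀ i, ∑ j, W i j = 1)
    (η γ ε : ℝ)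
    (hη : η = ‖(Matrix.toEuclideanCLM (𝕜 := ℝ) (1 - W) : EuclideanSpace ℝ (Fin n) →L[ℝ] EuclideanSpace ℝ (Fin n))‖)
    (X Xh D Xp : Matrix (Fin n) (Fin p) ℝ)
    (xbar : Fin p → ℝ)
    (hXp : Xp = X - γ • ((1 - W) * Xh) - ε • D) :
    frobeniusNorm (Xp - X) ^ 2
      ≤ 3 * γ ^ 2 * η ^ 2 * frobeniusNorm (X - Xh) ^ 2
        + 3 * γ ^ 2 * η ^ 2 * frobeniusNorm (X - Matrix.of fun _ j => xbar j) ^ 2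
        + 3 * ε ^ 2 * frobeniusNorm D ^ 2 := by
  set R : Matrix (Fin n) (Fin p) ℝ := Matrix.of fun _ j => xbar j
  have hrow : ∀ i, ∑ j, (1 - W) i j = 0 := fun i => by
    simp [Matrix.sub_apply, Finset.sum_sub_distrib, hW i, Matrix.one_apply]
  have hL : (1 - W) * R = 0 := Matrix.mul_replicateRow_eq_zero hrow xbar
  have hsplit : Xp - X = γ • ((1 - W) * (X - Xh)) + γ • ((1 - W) * (R - X)) + (-ε) • D := by
    rw [hXp, Matrix.mul_sub, Matrix.mul_sub, hL]
    module
  have hU : ‖(1 - W) * (X - Xh)‖ ≤ η * ‖X - Xh‖ := by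
    rw [hη]; exact Matrix.frobenius_norm_mul_le_toEuclideanCLM _ _
  have hV : ‖(1 - W) * (R - X)‖ ≤ η * ‖X - R‖ := by
    rw [hη, norm_sub_rev X]; exact Matrix.frobenius_norm_mul_le_toEuclideanCLM _ _
  simp only [frobeniusNorm_eq_norm]
  calc ‖Xp - X‖ ^ 2
      ≤ 3 * ‖γ • ((1 - W) * (X - Xh))‖ ^ 2 + 3 * ‖γ • ((1 - W) * (R - X))‖ ^ 2
        + 3 * ‖(-ε) • D‖ ^ 2 := hsplit ▸ norm_add₃_sq_le _ _ _
    _ = 3 * γ ^ 2 * ‖(1 - W) * (X - Xh)‖ ^ 2 + 3 * γ ^ 2 * ‖(1 - W) * (R - X)‖ ^ 2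
        + 3 * ε ^ 2 * ‖D‖ ^ 2 := by
      simp only [norm_smul, mul_pow, Real.norm_eq_abs, sq_abs, neg_sq]; ring
    _ ≤ 3 * γ ^ 2 * (η * ‖X - Xh‖) ^ 2 + 3 * γ ^ 2 * (η * ‖X - R‖) ^ 2
        + 3 * ε ^ 2 * ‖D‖ ^ 2 := by gcongr
    _ = _ := by ring

/-- One-step displacement bound for the decision-variable update of CONGO:
with `W𝟙 = 𝟙`, `η = ‖I − W‖` (ℓ₂ operator norm) and `X⁺ = X − γ(I − W)X̂ − εD`,
`‖X⁺ − X‖² ≤ 3γ²η²‖X − X̂‖² + 3γ²η²‖X − 𝟙x̄‖² + 3ε²‖D‖²` in Frobenius norm. -/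
theorem decision_update_displacement_bound (n p : ℕ) (W : Matrix (Fin n) (Fin n) ℝ)
    (hW : ∀ i, ∑ j, W i j = 1)
    (η γ ε : ℝ)
    (hη : η = ‖(Matrix.toEuclideanCLM (𝕜 := ℝ) (1 - W) : EuclideanSpace ℝ (Fin n) →L[ℝ] EuclideanSpace ℝ (Fin n))‖)
    (X Xh D Xp : Matrix (Fin n) (Fin p) ℝ)
    (xbar : Fin p → ℝ) (hxbar : xbar = fun j => (1 / (n : ℝ)) * ∑ i, X i j)
    (hXp : Xp = X - γ • ((1 - W) * Xh) - ε • D) :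
    frobeniusNorm (Xp - X) ^ 2
      ≤ 3 * γ ^ 2 * η ^ 2 * frobeniusNorm (X - Xh) ^ 2
        + 3 * γ ^ 2 * η ^ 2 * frobeniusNorm (X - Matrix.of fun _ j => xbar j) ^ 2
        + 3 * ε ^ 2 * frobeniusNorm D ^ 2 :=
  decision_update_displacement_bound_general n p W hW η γ ε hη X Xh D Xp xbar hXp
end

section
/- Let (Ω, P) be a probability space, E a real inner product space, and let Q : E × Ω → E be a (measurable) random operator such that for some r > 0 and δ ∈ (0, 1], E_ω[‖Q(x, ω)/r − x‖²] ≤ (1 − δ)·‖x‖² for every x ∈ E. Let α satisfy 0 < α·r ≤ 1, let τ > 1, and let X, X⁺, H ∈ E. Define H⁺(ω) = (1 − α)·H + α·(Q(X − H, ω) + H). Then E_ω[‖X⁺ − H⁺(ω)‖²] ≤ τ·(1 − α·r·δ)·‖X − H‖² + (τ/(τ − 1))·‖X⁺ − X‖². -/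
open MeasureTheory

/-- Young's inequality for the square. -/
private lemma young_sq {τ : ℝ} (hτ : 1 < τ) (a b : ℝ) :
    (a + b) ^ 2 ≤ τ / (τ - 1) * a ^ 2 + τ * b ^ 2 := by
  have hτ1 : (0:ℝ) < τ - 1 := by linarith
  have key : (τ - 1) * (a + b) ^ 2 ≤ τ * a ^ 2 + τ * (τ - 1) * b ^ 2 := by
    nlinarith [sq_nonneg (a - (τ - 1) * b)]
  have h2 : (a + b) ^ 2 ≤ (τ * a ^ 2 + τ * (τ - 1) * b ^ 2) / (τ - 1) :=
    (le_div_iff₀ hτ1).mpr (by linarith)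
  have h3 : (τ * a ^ 2 + τ * (τ - 1) * b ^ 2) / (τ - 1)
      = τ / (τ - 1) * a ^ 2 + τ * b ^ 2 := by field_simp
  linarith [h2, h3.le, h3.ge]

private lemma conv_sq {s A B : ℝ} (hs : 0 ≤ s) (hs1 : s ≤ 1) :
    ((1 - s) * A + s * B) ^ 2 ≤ (1 - s) * A ^ 2 + s * B ^ 2 := by
  nlinarith [mul_nonneg (mul_nonneg hs (by linarith : (0:ℝ) ≤ 1 - s)) (sq_nonneg (A - B))]

/-- One-step recursion for the compression error of CONGO: if `Q` is an `r`-scaled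
general compression operator with contraction parameter `δ`, `0 < αr ≤ 1`, `τ > 1`,
and `H⁺(ω) = (1 − α)H + α(Q(X − H, ω) + H)`, then
`E_ω[‖X⁺ − H⁺(ω)‖²] ≤ τ(1 − αrδ)‖X − H‖² + (τ/(τ − 1))‖X⁺ − X‖²`. -/
theorem compression_error_recursion {Ω : Type*} [MeasurableSpace Ω]
    (P : Measure Ω) [IsProbabilityMeasure P]
    {E : Type*} [NormedAddCommGroup E] [InnerProductSpace ℝ E]
    [MeasurableSpace E] [BorelSpace E]
    (Q : E → Ω → E) (hQmeas : ∀ x, Measurable (Q x))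
    (r δ : ℝ) (hr : 0 < r) (hδ0 : 0 < δ) (hδ1 : δ ≤ 1)
    (hQ : ∀ x : E, ∫ ω, ‖(1 / r) • Q x ω - x‖ ^ 2 ∂P ≤ (1 - δ) * ‖x‖ ^ 2)
    (α : ℝ) (hα0 : 0 < α * r) (hα1 : α * r ≤ 1)
    (τ : ℝ) (hτ : 1 < τ)
    (X Xp H : E)
    (Hp : Ω → E) (hHp : ∀ ω, Hp ω = (1 - α) • H + α • (Q (X - H) ω + H)) :
    ∫ ω, ‖Xp - Hp ω‖ ^ 2 ∂P
      ≤ τ * (1 - α * r * δ) * ‖X - H‖ ^ 2 + (τ / (τ - 1)) * ‖Xp - X‖ ^ 2 := by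
  have hτ1 : (0:ℝ) < τ - 1 := by linarith
  have hτ0 : (0:ℝ) < τ := by linarith
  have hα : 0 < α := by
    by_contra h
    push_neg at h
    nlinarith
  obtain ⟨y, hy⟩ : ∃ y : E, y = X - H := ⟨_, rfl⟩
  obtain ⟨t, ht⟩ : ∃ t : ℝ, t = α * r := ⟨_, rfl⟩
  rw [← hy, ← ht]
  rw [← ht] at hα0 hα1
  have hQy : ∫ ω, ‖(1 / r) • Q y ω - y‖ ^ 2 ∂P ≤ (1 - δ) * ‖y‖ ^ 2 := by
    rw [hy]; exact hQ (X - H)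
  have hQym : Measurable (Q y) := by rw [hy]; exact hQmeas (X - H)
  -- Rewriting `Xp - Hp ω`
  have hHp' : ∀ ω, Xp - Hp ω = (Xp - X) + (y - α • Q y ω) := by
    intro ω
    rw [hHp ω, hy]
    module
  have htα : t * (1 / r) = α := by rw [ht]; field_simp
  -- convexity decomposition
  have hdecomp : ∀ ω, y - α • Q y ω = (1 - t) • y + t • (y - (1 / r) • Q y ω) := by
    intro ω
    have e : t • ((1 / r) • Q y ω) = α • Q y ω := by rw [smul_smul, htα]
    rw [smul_sub t, e]
    module
  -- pointwise bound
  have hpt : ∀ ω, ‖Xp - Hp ω‖ ^ 2 ≤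
      (τ / (τ - 1) * ‖Xp - X‖ ^ 2 + τ * (1 - t) * ‖y‖ ^ 2)
        + τ * t * ‖y - (1 / r) • Q y ω‖ ^ 2 := by
    intro ω
    have ht0 : (0:ℝ) < t := hα0
    have hBle : ‖y - α • Q y ω‖ ≤ (1 - t) * ‖y‖ + t * ‖y - (1 / r) • Q y ω‖ := by
      rw [hdecomp ω]
      calc ‖(1 - t) • y + t • (y - (1 / r) • Q y ω)‖
          ≤ ‖(1 - t) • y‖ + ‖t • (y - (1 / r) • Q y ω)‖ := norm_add_le _ _
        _ = (1 - t) * ‖y‖ + t * ‖y - (1 / r) • Q y ω‖ := by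
            rw [norm_smul, norm_smul, Real.norm_eq_abs, Real.norm_eq_abs,
              abs_of_nonneg (by linarith : (0:ℝ) ≤ 1 - t), abs_of_nonneg ht0.le]
    have hN : ‖Xp - Hp ω‖ ≤ ‖Xp - X‖ + ‖y - α • Q y ω‖ := by
      rw [hHp' ω]; exact norm_add_le _ _
    have hN2 : ‖Xp - Hp ω‖ ^ 2 ≤ (‖Xp - X‖ + ‖y - α • Q y ω‖) ^ 2 :=
      pow_le_pow_left₀ (norm_nonneg _) hN 2
    have hyoung : (‖Xp - X‖ + ‖y - α • Q y ω‖) ^ 2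
        ≤ τ / (τ - 1) * ‖Xp - X‖ ^ 2 + τ * ‖y - α • Q y ω‖ ^ 2 := young_sq hτ _ _
    have hB2 : ‖y - α • Q y ω‖ ^ 2
        ≤ ((1 - t) * ‖y‖ + t * ‖y - (1 / r) • Q y ω‖) ^ 2 :=
      pow_le_pow_left₀ (norm_nonneg _) hBle 2
    have hconv : ((1 - t) * ‖y‖ + t * ‖y - (1 / r) • Q y ω‖) ^ 2
        ≤ (1 - t) * ‖y‖ ^ 2 + t * ‖y - (1 / r) • Q y ω‖ ^ 2 :=
      conv_sq ht0.le hα1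
    nlinarith [hN2, hyoung, hB2, hconv, hτ0.le]
  -- measurability
  have hmeasg : Measurable fun ω => ‖Xp - Hp ω‖ ^ 2 := by
    have e : (fun ω => ‖Xp - Hp ω‖ ^ 2)
        = fun ω => ‖(Xp - X) + (y - α • Q y ω)‖ ^ 2 := by
      funext ω; rw [hHp' ω]
    rw [e]
    have hc : Continuous fun v : E => ‖(Xp - X) + (y - α • v)‖ ^ 2 := by
      fun_prop
    exact hc.measurable.comp hQym
  have hmeash : Measurable fun ω => ‖y - (1 / r) • Q y ω‖ ^ 2 := by
    have hc : Continuous fun v : E => ‖y - (1 / r) • v‖ ^ 2 := by fun_prop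
    exact hc.measurable.comp hQym
  have ht0 : (0:ℝ) < t := hα0
  by_cases hInt : Integrable (fun ω => ‖y - (1 / r) • Q y ω‖ ^ 2) P
  · -- main case: everything is integrable
    obtain ⟨c₀, hc₀⟩ : ∃ c₀ : ℝ,
        c₀ = τ / (τ - 1) * ‖Xp - X‖ ^ 2 + τ * (1 - t) * ‖y‖ ^ 2 := ⟨_, rfl⟩
    have hpt' : ∀ ω, ‖Xp - Hp ω‖ ^ 2 ≤ c₀ + τ * t * ‖y - (1 / r) • Q y ω‖ ^ 2 := by
      intro ω; rw [hc₀]; exact hpt ω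
    have hbInt : Integrable (fun ω => c₀ + τ * t * ‖y - (1 / r) • Q y ω‖ ^ 2) P :=
      (integrable_const c₀).add (hInt.const_mul (τ * t))
    have hgInt : Integrable (fun ω => ‖Xp - Hp ω‖ ^ 2) P := by
      apply hbInt.mono' hmeasg.aestronglyMeasurable
      filter_upwards with ω
      rw [Real.norm_eq_abs, abs_of_nonneg (by positivity)]
      exact hpt' ω
    have hle : ∫ ω, ‖Xp - Hp ω‖ ^ 2 ∂P
        ≤ ∫ ω, (c₀ + τ * t * ‖y - (1 / r) • Q y ω‖ ^ 2) ∂P :=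
      integral_mono hgInt hbInt hpt'
    have hsplit : ∫ ω, (c₀ + τ * t * ‖y - (1 / r) • Q y ω‖ ^ 2) ∂P
        = c₀ + τ * t * ∫ ω, ‖y - (1 / r) • Q y ω‖ ^ 2 ∂P := by
      rw [integral_add (integrable_const c₀) (hInt.const_mul (τ * t)),
        integral_const_mul, integral_const]
      simp
    have hflip : ∫ ω, ‖y - (1 / r) • Q y ω‖ ^ 2 ∂P ≤ (1 - δ) * ‖y‖ ^ 2 := by
      have e : (fun ω => ‖y - (1 / r) • Q y ω‖ ^ 2)
          = fun ω => ‖(1 / r) • Q y ω - y‖ ^ 2 := by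
        funext ω; rw [← norm_neg]; congr 1; abel
      rw [e]; exact hQy
    have hmono : τ * t * ∫ ω, ‖y - (1 / r) • Q y ω‖ ^ 2 ∂P
        ≤ τ * t * ((1 - δ) * ‖y‖ ^ 2) :=
      mul_le_mul_of_nonneg_left hflip (by positivity)
    calc ∫ ω, ‖Xp - Hp ω‖ ^ 2 ∂P
        ≤ c₀ + τ * t * ∫ ω, ‖y - (1 / r) • Q y ω‖ ^ 2 ∂P := by
          rw [← hsplit]; exact hle
      _ ≤ c₀ + τ * t * ((1 - δ) * ‖y‖ ^ 2) := by linarith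
      _ = τ * (1 - t * δ) * ‖y‖ ^ 2 + (τ / (τ - 1)) * ‖Xp - X‖ ^ 2 := by
          rw [hc₀]; ring
  · -- degenerate case: the integrand is not integrable, so the integral is 0
    have hgNotInt : ¬ Integrable (fun ω => ‖Xp - Hp ω‖ ^ 2) P := by
      intro hgInt
      apply hInt
      obtain ⟨c, hc⟩ : ∃ c : ℝ, c = ‖y‖ + 1 / t * (‖y‖ + ‖Xp - X‖) := ⟨_, rfl⟩
      have hcnn : 0 ≤ c := by rw [hc]; positivity
      have hptB : ∀ ω, ‖y - (1 / r) • Q y ω‖ ^ 2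
          ≤ 2 * c ^ 2 + 2 * (1 / t) ^ 2 * ‖Xp - Hp ω‖ ^ 2 := by
        intro ω
        have hid : y - (1 / r) • Q y ω
            = y - (1 / t) • ((Xp - X) + y - (Xp - Hp ω)) := by
          rw [hHp' ω]
          have e : (1 / r) • Q y ω = (1 / t) • (α • Q y ω) := by
            rw [smul_smul]
            congr 1
            rw [ht]
            field_simp
          rw [e]
          module
        have hCle : ‖y - (1 / r) • Q y ω‖ ≤ c + 1 / t * ‖Xp - Hp ω‖ := by
          rw [hid, hc]
          have h1 : ‖y - (1 / t) • ((Xp - X) + y - (Xp - Hp ω))‖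
              ≤ ‖y‖ + ‖(1 / t) • ((Xp - X) + y - (Xp - Hp ω))‖ := norm_sub_le _ _
          have h2 : ‖(1 / t) • ((Xp - X) + y - (Xp - Hp ω))‖
              = 1 / t * ‖(Xp - X) + y - (Xp - Hp ω)‖ := by
            rw [norm_smul, Real.norm_eq_abs, abs_of_nonneg (by positivity)]
          have h3 : ‖(Xp - X) + y - (Xp - Hp ω)‖
              ≤ ‖y‖ + ‖Xp - X‖ + ‖Xp - Hp ω‖ := by
            calc ‖(Xp - X) + y - (Xp - Hp ω)‖
                ≤ ‖(Xp - X) + y‖ + ‖Xp - Hp ω‖ := norm_sub_le _ _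
              _ ≤ ‖Xp - X‖ + ‖y‖ + ‖Xp - Hp ω‖ := by
                  have := norm_add_le (Xp - X) y; linarith
              _ = ‖y‖ + ‖Xp - X‖ + ‖Xp - Hp ω‖ := by ring
          have h4 : 1 / t * ‖(Xp - X) + y - (Xp - Hp ω)‖
              ≤ 1 / t * (‖y‖ + ‖Xp - X‖ + ‖Xp - Hp ω‖) :=
            mul_le_mul_of_nonneg_left h3 (by positivity)
          have h5 : 1 / t * (‖y‖ + ‖Xp - X‖ + ‖Xp - Hp ω‖)
              = 1 / t * (‖y‖ + ‖Xp - X‖) + 1 / t * ‖Xp - Hp ω‖ := by ring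
          linarith
        have hsq : ‖y - (1 / r) • Q y ω‖ ^ 2 ≤ (c + 1 / t * ‖Xp - Hp ω‖) ^ 2 :=
          pow_le_pow_left₀ (norm_nonneg _) hCle 2
        nlinarith [hsq, sq_nonneg (c - 1 / t * ‖Xp - Hp ω‖)]
      have hbInt : Integrable
          (fun ω => 2 * c ^ 2 + 2 * (1 / t) ^ 2 * ‖Xp - Hp ω‖ ^ 2) P :=
        (integrable_const _).add (hgInt.const_mul _)
      apply hbInt.mono' hmeash.aestronglyMeasurable
      filter_upwards with ω
      rw [Real.norm_eq_abs, abs_of_nonneg (by positivity)]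
      exact hptB ω
    rw [integral_undef hgNotInt]
    have h1 : 0 ≤ 1 - t * δ := by
      have : t * δ ≤ 1 * 1 := mul_le_mul hα1 hδ1 hδ0.le zero_le_one
      linarith
    have h2 : (0:ℝ) ≤ τ * (1 - t * δ) * ‖y‖ ^ 2 :=
      mul_nonneg (mul_nonneg hτ0.le h1) (sq_nonneg _)
    have h3 : (0:ℝ) ≤ (τ / (τ - 1)) * ‖Xp - X‖ ^ 2 :=
      mul_nonneg (div_nonneg hτ0.le hτ1.le) (sq_nonneg _)
    linarith
end

section
/- Let f₁, …, f_n : ℝ^p → ℝ be differentiable with L-Lipschitz gradients, let x₁, …, x_n ∈ ℝ^p with average x̄ = (1/n)∑ᵢ xᵢ, set ḡ = (1/n)∑ᵢ ∇f_i(xᵢ), and let x* ∈ ℝ^p satisfy ∑ᵢ ∇f_i(x*) = 0. Then for any y₁, …, y_n ∈ ℝ^p and any τ > 0: ∑ᵢ ‖yᵢ‖² ≤ (1 + τ)·∑ᵢ ‖yᵢ − ḡ‖² + 2L²(1 + 1/τ)·∑ᵢ ‖xᵢ − x̄‖² + 2nL²(1 + 1/τ)·‖x̄ − x*‖². -/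
/-- Bound on the squared norm of the stacked tracker by the gradient-tracking error,
the consensus error, and the optimality error: if the `∇f_i` are `L`-Lipschitz,
`x̄ = (1/n)∑ᵢ xᵢ`, `ḡ = (1/n)∑ᵢ ∇f_i(xᵢ)` and `∑ᵢ ∇f_i(x*) = 0`, then for all `yᵢ`
and `τ > 0`:
`∑ᵢ ‖yᵢ‖² ≤ (1 + τ)∑ᵢ ‖yᵢ − ḡ‖² + 2L²(1 + 1/τ)∑ᵢ ‖xᵢ − x̄‖² + 2nL²(1 + 1/τ)‖x̄ − x*‖²`. -/
theorem tracker_norm_bound (n p : ℕ) (hn : 0 < n)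
    (f : Fin n → EuclideanSpace ℝ (Fin p) → ℝ) (L : ℝ)
    (hdiff : ∀ i, Differentiable ℝ (f i))
    (hlip : ∀ i (a b : EuclideanSpace ℝ (Fin p)),
      ‖gradient (f i) a - gradient (f i) b‖ ≤ L * ‖a - b‖)
    (x : Fin n → EuclideanSpace ℝ (Fin p))
    (xbar : EuclideanSpace ℝ (Fin p)) (hxbar : xbar = (1 / (n : ℝ)) • ∑ i, x i)
    (gbar : EuclideanSpace ℝ (Fin p))
    (hgbar : gbar = (1 / (n : ℝ)) • ∑ i, gradient (f i) (x i))
    (xstar : EuclideanSpace ℝ (Fin p)) (hxstar : ∑ i, gradient (f i) xstar = 0)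
    (y : Fin n → EuclideanSpace ℝ (Fin p)) (τ : ℝ) (hτ : 0 < τ) :
    ∑ i, ‖y i‖ ^ 2
      ≤ (1 + τ) * ∑ i, ‖y i - gbar‖ ^ 2
        + 2 * L ^ 2 * (1 + 1 / τ) * ∑ i, ‖x i - xbar‖ ^ 2
        + 2 * n * L ^ 2 * (1 + 1 / τ) * ‖xbar - xstar‖ ^ 2 := by
  have hn' : (0:ℝ) < n := by exact_mod_cast hn
  -- Step 1: pointwise Young-type inequality
  have h1 : ∀ i, ‖y i‖ ^ 2 ≤ (1 + τ) * ‖y i - gbar‖ ^ 2 + (1 + 1/τ) * ‖gbar‖ ^ 2 := by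
    intro i
    have h := norm_add_le (y i - gbar) gbar
    rw [sub_add_cancel] at h
    have h2 : 2 * ‖y i - gbar‖ * ‖gbar‖ ≤ τ * ‖y i - gbar‖^2 + (1/τ) * ‖gbar‖^2 := by
      rw [← sub_nonneg]
      have he : τ * ‖y i - gbar‖^2 + (1/τ) * ‖gbar‖^2 - 2 * ‖y i - gbar‖ * ‖gbar‖
          = (τ * ‖y i - gbar‖ - ‖gbar‖)^2 / τ := by field_simp; ring
      rw [he]; positivity
    have hsq := mul_self_le_mul_self (norm_nonneg (y i)) h
    nlinarith [hsq, h2]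
  have hsum1 : ∑ i, ‖y i‖ ^ 2 ≤ (1 + τ) * ∑ i, ‖y i - gbar‖ ^ 2 + n * ((1 + 1/τ) * ‖gbar‖ ^ 2) := by
    calc ∑ i, ‖y i‖ ^ 2 ≤ ∑ i, ((1 + τ) * ‖y i - gbar‖ ^ 2 + (1 + 1/τ) * ‖gbar‖ ^ 2) :=
          Finset.sum_le_sum fun i _ => h1 i
      _ = (1 + τ) * ∑ i, ‖y i - gbar‖ ^ 2 + n * ((1 + 1/τ) * ‖gbar‖ ^ 2) := by
          rw [Finset.sum_add_distrib, ← Finset.mul_sum, Finset.sum_const, Finset.card_univ,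
            Fintype.card_fin, nsmul_eq_mul]
  -- Step 2: bound on n‖gbar‖²
  have hS : ‖∑ i, gradient (f i) (x i)‖ ≤ L * ∑ i, ‖x i - xstar‖ := by
    have : (∑ i, gradient (f i) (x i)) = ∑ i, (gradient (f i) (x i) - gradient (f i) xstar) := by
      rw [Finset.sum_sub_distrib, hxstar, sub_zero]
    rw [this]
    calc ‖∑ i, (gradient (f i) (x i) - gradient (f i) xstar)‖
        ≤ ∑ i, ‖gradient (f i) (x i) - gradient (f i) xstar‖ := norm_sum_le _ _
      _ ≤ ∑ i, L * ‖x i - xstar‖ := Finset.sum_le_sum fun i _ => hlip i _ _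
      _ = L * ∑ i, ‖x i - xstar‖ := by rw [Finset.mul_sum]
  have hgb : (n:ℝ) * ‖gbar‖ ^ 2 ≤ L ^ 2 * ∑ i, ‖x i - xstar‖ ^ 2 := by
    have hgnorm : ‖gbar‖ = (1/(n:ℝ)) * ‖∑ i, gradient (f i) (x i)‖ := by
      rw [hgbar, norm_smul]
      simp [abs_of_pos (by positivity : (0:ℝ) < 1/(n:ℝ))]
    have hCS : (∑ i, ‖x i - xstar‖) ^ 2 ≤ (n:ℝ) * ∑ i, ‖x i - xstar‖ ^ 2 := by
      have := sq_sum_le_card_mul_sum_sq (s := Finset.univ) (f := fun i => ‖x i - xstar‖)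
      simpa [Finset.card_univ] using this
    have hSnn : (0:ℝ) ≤ ‖∑ i, gradient (f i) (x i)‖ := norm_nonneg _
    have hsq : ‖∑ i, gradient (f i) (x i)‖ ^ 2 ≤ (L * ∑ i, ‖x i - xstar‖) ^ 2 := by
      have hR : (0:ℝ) ≤ L * ∑ i, ‖x i - xstar‖ := le_trans hSnn hS
      nlinarith
    rw [hgnorm]
    have : ((1/(n:ℝ)) * ‖∑ i, gradient (f i) (x i)‖) ^ 2
        = (1/(n:ℝ))^2 * ‖∑ i, gradient (f i) (x i)‖ ^ 2 := by ring
    rw [this]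
    calc (n:ℝ) * ((1/(n:ℝ))^2 * ‖∑ i, gradient (f i) (x i)‖ ^ 2)
        ≤ (n:ℝ) * ((1/(n:ℝ))^2 * (L * ∑ i, ‖x i - xstar‖) ^ 2) := by
          apply mul_le_mul_of_nonneg_left _ hn'.le
          exact mul_le_mul_of_nonneg_left hsq (by positivity)
      _ = (1/(n:ℝ)) * (L^2 * (∑ i, ‖x i - xstar‖) ^ 2) := by field_simp
      _ ≤ (1/(n:ℝ)) * (L^2 * ((n:ℝ) * ∑ i, ‖x i - xstar‖ ^ 2)) := by
          apply mul_le_mul_of_nonneg_left _ (by positivity)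
          exact mul_le_mul_of_nonneg_left hCS (by positivity)
      _ = L ^ 2 * ∑ i, ‖x i - xstar‖ ^ 2 := by field_simp
  -- Step 3: split xᵢ - x* = (xᵢ - x̄) + (x̄ - x*)
  have hsplit : ∑ i, ‖x i - xstar‖ ^ 2
      ≤ 2 * ∑ i, ‖x i - xbar‖ ^ 2 + 2 * (n:ℝ) * ‖xbar - xstar‖ ^ 2 := by
    have hpt : ∀ i : Fin n, ‖x i - xstar‖ ^ 2 ≤ 2 * ‖x i - xbar‖ ^ 2 + 2 * ‖xbar - xstar‖ ^ 2 := by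
      intro i
      have h := norm_add_le (x i - xbar) (xbar - xstar)
      have he : x i - xbar + (xbar - xstar) = x i - xstar := by abel
      rw [he] at h
      nlinarith [norm_nonneg (x i - xbar), norm_nonneg (xbar - xstar), norm_nonneg (x i - xstar),
        sq_nonneg (‖x i - xbar‖ - ‖xbar - xstar‖)]
    calc ∑ i, ‖x i - xstar‖ ^ 2 ≤ ∑ i, (2 * ‖x i - xbar‖ ^ 2 + 2 * ‖xbar - xstar‖ ^ 2) :=
          Finset.sum_le_sum fun i _ => hpt i
      _ = 2 * ∑ i, ‖x i - xbar‖ ^ 2 + 2 * (n:ℝ) * ‖xbar - xstar‖ ^ 2 := by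
          rw [Finset.sum_add_distrib, ← Finset.mul_sum, Finset.sum_const, Finset.card_univ,
            Fintype.card_fin, nsmul_eq_mul]; ring
  -- Combine
  have hτ' : (0:ℝ) < 1 + 1/τ := by positivity
  have hfinal : (n:ℝ) * ((1 + 1/τ) * ‖gbar‖ ^ 2)
      ≤ 2 * L ^ 2 * (1 + 1 / τ) * ∑ i, ‖x i - xbar‖ ^ 2
        + 2 * n * L ^ 2 * (1 + 1 / τ) * ‖xbar - xstar‖ ^ 2 := by
    have h2 : L ^ 2 * ∑ i, ‖x i - xstar‖ ^ 2
        ≤ L ^ 2 * (2 * ∑ i, ‖x i - xbar‖ ^ 2 + 2 * (n:ℝ) * ‖xbar - xstar‖ ^ 2) :=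
      mul_le_mul_of_nonneg_left hsplit (sq_nonneg L)
    calc (n:ℝ) * ((1 + 1/τ) * ‖gbar‖ ^ 2) = (1 + 1/τ) * ((n:ℝ) * ‖gbar‖ ^ 2) := by ring
      _ ≤ (1 + 1/τ) * (L ^ 2 * ∑ i, ‖x i - xstar‖ ^ 2) :=
          mul_le_mul_of_nonneg_left hgb hτ'.le
      _ ≤ (1 + 1/τ) * (L ^ 2 * (2 * ∑ i, ‖x i - xbar‖ ^ 2 + 2 * (n:ℝ) * ‖xbar - xstar‖ ^ 2)) :=
          mul_le_mul_of_nonneg_left h2 hτ'.le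
      _ = 2 * L ^ 2 * (1 + 1 / τ) * ∑ i, ‖x i - xbar‖ ^ 2
          + 2 * n * L ^ 2 * (1 + 1 / τ) * ‖xbar - xstar‖ ^ 2 := by ring
  linarith [hsum1, hfinal]
end
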